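/- Let G be a finite simple graph with a minimum vertex cover C, and suppose there exist two (not necessarily distinct) vertices u, v ∈ C that have at most two common neighbors in V(G) − C. Then G is of class one. -/

import Mathlib

open Finset

/-- `C` is a vertex cover of `G`: every edge has an endpoint in `C`. -/
def IsCover {V : Type*} (G : SimpleGraph V) (C : Finset V) : Prop :=
  ∀ ⦃u v : V⦄, G.Adj u v → u ∈ C ∨ v ∈ C

/-- `A` is an independent set of `G`: no two of its vertices are adjacent. -/
def IsIndep {V : Type*} (G : SimpleGraph V) (A : Finset V) : Prop :=
  ∀ ⦃u : V⦄, u ∈ A → ∀ ⦃v : V⦄, v ∈ A → ¬ G.Adj u v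

/-- The vertex cover number β(G): the minimum size of a vertex cover of `G`. -/
noncomputable def coverNumber {V : Type*} [Fintype V] (G : SimpleGraph V) : ℕ :=
  sInf {n : ℕ | ∃ C : Finset V, IsCover G C ∧ C.card = n}

/-- `G` admits a feasible schedule for a boat of capacity `b`, in the sense of the
structure theorem of Csorba, Hurkens and Woeginger. -/
def Feasible {V : Type*} [Fintype V] [DecidableEq V] (G : SimpleGraph V) (b : ℕ) : Prop :=
  ∃ X₁ X₂ X₃ Y₁ Y₂ : Finset V,
    Disjoint X₁ X₂ ∧ Disjoint X₁ X₃ ∧ Disjoint X₂ X₃ ∧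
    IsIndep G (X₁ ∪ X₂ ∪ X₃) ∧
    Y₁.Nonempty ∧ Y₂.Nonempty ∧
    Y₁ ⊆ Finset.univ \ (X₁ ∪ X₂ ∪ X₃) ∧ Y₂ ⊆ Finset.univ \ (X₁ ∪ X₂ ∪ X₃) ∧
    (Finset.univ \ (X₁ ∪ X₂ ∪ X₃)).card ≤ b ∧
    IsIndep G (X₁ ∪ Y₁) ∧ IsIndep G (X₂ ∪ Y₂) ∧
    X₃.card ≤ Y₁.card + Y₂.card

/-- `G` is of class one if it has a feasible schedule for boat capacity β(G). -/
def ClassOne {V : Type*} [Fintype V] [DecidableEq V] (G : SimpleGraph V) : Prop :=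
  Feasible G (coverNumber G)

/-- `G` is of class two if it is not of class one. -/
def ClassTwo {V : Type*} [Fintype V] [DecidableEq V] (G : SimpleGraph V) : Prop :=
  ¬ ClassOne G

/-! Take `Y₁ = {u}` and `Y₂ = {v}`; the boat carries `Y = C`, which fits since `|C| = β(G)`.
Because `C` is a cover, `V − C` is independent, and it splits into `X₁` (no neighbour in `Y₁`),
`X₂` (a neighbour in `Y₁` but none in `Y₂`) and `X₃` (neighbours in both). Then `X₁ ∪ Y₁` and
`X₂ ∪ Y₂` are independent, and `|X₃| ≤ |Y₁| + |Y₂| = 2` is exactly the hypothesis. -/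

section

variable {V : Type*}

def commonNbrsOutside [Fintype V] [DecidableEq V] (G : SimpleGraph V) [DecidableRel G.Adj]
    (C Y₁ Y₂ : Finset V) : Finset V :=
  (univ \ C).filter fun w => (∃ y ∈ Y₁, G.Adj y w) ∧ ∃ y ∈ Y₂, G.Adj y w

variable {G : SimpleGraph V}

theorem IsIndep.mono {A B : Finset V} (hB : IsIndep G B) (hAB : A ⊆ B) : IsIndep G A :=
  fun _ ha _ hb => hB (hAB ha) (hAB hb)

theorem isIndep_singleton (u : V) : IsIndep G {u} := by
  intro a ha b hb
  rw [mem_singleton] at ha hb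
  rw [ha, hb]
  exact G.loopless.irrefl u

theorem IsIndep.union [DecidableEq V] {A B : Finset V} (hA : IsIndep G A) (hB : IsIndep G B)
    (hAB : ∀ a ∈ A, ∀ b ∈ B, ¬ G.Adj a b) : IsIndep G (A ∪ B) := by
  intro a ha b hb
  rcases mem_union.mp ha with ha | ha <;> rcases mem_union.mp hb with hb | hb
  · exact hA ha hb
  · exact hAB a ha b hb
  · exact fun hab => hAB b hb a ha hab.symm
  · exact hB ha hb

theorem IsCover.isIndep_compl [Fintype V] [DecidableEq V] {C : Finset V} (hC : IsCover G C) :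
    IsIndep G (univ \ C) := by
  intro a ha b hb hab
  rw [mem_sdiff] at ha hb
  exact (hC hab).elim ha.2 hb.2

theorem feasible_of_isCover [Fintype V] [DecidableEq V] [DecidableRel G.Adj] {C Y₁ Y₂ : Finset V}
    {b : ℕ} (hC : IsCover G C) (hb : C.card ≤ b) (hY₁C : Y₁ ⊆ C) (hY₂C : Y₂ ⊆ C)
    (hY₁ : Y₁.Nonempty) (hY₂ : Y₂.Nonempty) (hY₁i : IsIndep G Y₁) (hY₂i : IsIndep G Y₂)
    (hcommon : (commonNbrsOutside G C Y₁ Y₂).card ≤ Y₁.card + Y₂.card) :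
    Feasible G b := by
  set X₁ := (univ \ C).filter fun w => ¬ ∃ y ∈ Y₁, G.Adj y w
  set X₂ := (univ \ C).filter fun w => (∃ y ∈ Y₁, G.Adj y w) ∧ ¬ ∃ y ∈ Y₂, G.Adj y w
  have hX : X₁ ∪ X₂ ∪ commonNbrsOutside G C Y₁ Y₂ = univ \ C := by
    ext w
    simp only [X₁, X₂, commonNbrsOutside, mem_union, mem_filter]
    generalize (∃ y ∈ Y₁, G.Adj y w) = p
    generalize (∃ y ∈ Y₂, G.Adj y w) = q
    tauto
  have hXi : IsIndep G (univ \ C) := hC.isIndep_compl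
  have hYcompl : univ \ (X₁ ∪ X₂ ∪ commonNbrsOutside G C Y₁ Y₂) = C := by
    rw [hX, sdiff_sdiff_right_self, inf_eq_inter, univ_inter]
  refine ⟨X₁, X₂, commonNbrsOutside G C Y₁ Y₂, Y₁, Y₂, ?_, ?_, ?_, hX ▸ hXi, hY₁, hY₂,
    by rwa [hYcompl], by rwa [hYcompl], by rwa [hYcompl], ?_, ?_, hcommon⟩
  · exact disjoint_filter.mpr fun _ _ h₁ h₂ => h₁ h₂.1
  · exact disjoint_filter.mpr fun _ _ h₁ h₂ => h₁ h₂.1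
  · exact disjoint_filter.mpr fun _ _ h₁ h₂ => h₁.2 h₂.2
  · refine (hXi.mono (filter_subset _ _)).union hY₁i fun x hx y hy hxy => ?_
    exact (mem_filter.mp hx).2 ⟨y, hy, hxy.symm⟩
  · refine (hXi.mono (filter_subset _ _)).union hY₂i fun x hx y hy hxy => ?_
    exact (mem_filter.mp hx).2.2 ⟨y, hy, hxy.symm⟩

end

/-- If a minimum vertex cover `C` contains two (not necessarily distinct) vertices with at
most two common neighbors in `V − C`, then `G` is of class one. -/
theorem classOne_of_few_common_neighbors {V : Type*} [Fintype V] [DecidableEq V]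
    (G : SimpleGraph V) [DecidableRel G.Adj] (C : Finset V)
    (hC : IsCover G C) (hmin : C.card = coverNumber G)
    (u v : V) (hu : u ∈ C) (hv : v ∈ C)
    (hcommon : (Finset.univ.filter (fun w => w ∉ C ∧ G.Adj u w ∧ G.Adj v w)).card ≤ 2) :
    ClassOne G := by
  have hsingle : commonNbrsOutside G C {u} {v} =
      Finset.univ.filter (fun w => w ∉ C ∧ G.Adj u w ∧ G.Adj v w) := by
    ext w
    simp [commonNbrsOutside]
  refine feasible_of_isCover hC hmin.le (singleton_subset_iff.mpr hu)
    (singleton_subset_iff.mpr hv) (singleton_nonempty u) (singleton_nonempty v)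
    (isIndep_singleton u) (isIndep_singleton v) ?_
  rwa [hsingle, card_singleton, card_singleton]
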